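/- (Proposition 4.3) Let 0 < δ ≤ σ ≤ 1 and let (M_T, I_T) be an FPTW with speed v > 0. Then both M_T and I_T are strictly monotone decreasing on ℝ, i.e. M_T'(z) < 0 and I_T'(z) < 0 for all z ∈ ℝ. -/

import Mathlib

noncomputable def sigmaP (α₂ β₁ β₂ : ℝ) : ℝ := α₂ / (β₁ * β₂)

noncomputable def aP (α₂ β₁ β₂ : ℝ) : ℝ := β₁ * (β₂ * sigmaP α₂ β₁ β₂ + α₂)

noncomputable def bP (α₂ β₁ β₂ : ℝ) : ℝ := β₂ / (β₂ * sigmaP α₂ β₁ β₂ + α₂)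

/-- The reduced reaction function `f(M,I)`. -/
noncomputable def fP (α₂ β₁ β₂ M I : ℝ) : ℝ :=
  aP α₂ β₁ β₂ * I * (bP α₂ β₁ β₂ * (sigmaP α₂ β₁ β₂ - 1) + bP α₂ β₁ β₂ * M - I) /
    (α₂ * I + β₂ * (1 - M))

/-- A full transition permanent form travelling wave ([FPTW]) with speed `v`:
a pair of C² profiles with values in `[0,1]²`, satisfying the travelling-wave ODEs
`M'' + v M' + I M (1 - M) = 0` and `δ (D I'' + v I') + f(M, I) = 0`, connecting
the fully saturated state `(1, b(σ)σ)` at `-∞` to the zero state `(0,0)` at `+∞`. -/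
structure IsFPTW (α₂ β₁ β₂ δ D v : ℝ) (M I : ℝ → ℝ) : Prop where
  smoothM : ContDiff ℝ 2 M
  smoothI : ContDiff ℝ 2 I
  rangeM : ∀ z, M z ∈ Set.Icc (0 : ℝ) 1
  rangeI : ∀ z, I z ∈ Set.Icc (0 : ℝ) 1
  odeM : ∀ z, deriv (deriv M) z + v * deriv M z + I z * M z * (1 - M z) = 0
  odeI : ∀ z, δ * (D * deriv (deriv I) z + v * deriv I z) + fP α₂ β₁ β₂ (M z) (I z) = 0
  limM_top : Filter.Tendsto M Filter.atTop (nhds 0)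
  limI_top : Filter.Tendsto I Filter.atTop (nhds 0)
  limM_bot : Filter.Tendsto M Filter.atBot (nhds 1)
  limI_bot : Filter.Tendsto I Filter.atBot (nhds (bP α₂ β₁ β₂ * sigmaP α₂ β₁ β₂))

/-!
Since `I M (1 - M) ≥ 0`, the function `e^{v z} M'(z)` is nonincreasing. A point with `M' > 0`
would then force `M' ≥ const > 0` on a left half-line, against the boundedness of `M`; a point
with `M' = 0` would force `M' ≡ 0` to its left, hence `M ≡ 1` there, and uniqueness for the
linear equation satisfied by `1 - M` would give `M ≡ 1` everywhere.

For `I > 0` the sign of `f(M, I)` is that of `N(M) - I`, where `N(M) = b(σ - 1) + b M`, and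
`I = I' = 0` at one point would force `I ≡ 0` by uniqueness, against `I → b σ` at `-∞`. If `I`
increased from `x` to `y`, it would have a local maximum at some `z₁ > x`, and since
`N(M(z₁)) < b σ`, a local minimum at some `z₂ < z₁` with `I(z₂) ≤ I(x)`. The equation for `I` at
these extrema gives `N(M(z₂)) ≤ I(z₂) < I(z₁) ≤ N(M(z₁))`, contradicting the monotonicity of `M`.
Finally, if `I'(z) = 0` then `I''(z) = 0`, so `I(z) = N(M(z))`; as `(N ∘ M - I)' = b M' < 0` at
`z`, `f > 0` just left of `z`, which makes `e^{v z / D} I'` strictly decreasing there, so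
`I' > 0` just left of `z`.
-/

open Set Filter Topology

theorem IsLocalMax.deriv_deriv_nonpos {f : ℝ → ℝ} {x : ℝ} (h : IsLocalMax f x)
    (hc : ContinuousAt f x) : deriv (deriv f) x ≤ 0 := by
  by_contra! hpos
  have hmin := isLocalMin_of_deriv_deriv_pos hpos h.deriv_eq_zero hc
  have hconst : f =ᶠ[𝓝 x] fun _ => f x := (h.and hmin).mono fun y hy => le_antisymm hy.1 hy.2
  have hderiv : deriv f =ᶠ[𝓝 x] fun _ => 0 := by
    simpa using hconst.deriv
  simp [hderiv.deriv_eq] at hpos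

theorem IsLocalMin.deriv_deriv_nonneg {f : ℝ → ℝ} {x : ℝ} (h : IsLocalMin f x)
    (hc : ContinuousAt f x) : 0 ≤ deriv (deriv f) x := by
  simpa [deriv.neg'] using h.neg.deriv_deriv_nonpos hc.neg

theorem eventually_nhdsLT_pos_of_deriv_neg {f : ℝ → ℝ} {z : ℝ} (hf : deriv f z < 0)
    (hz : f z = 0) : ∀ᶠ x in 𝓝[<] z, 0 < f x := by
  filter_upwards [nhdsWithin_le_nhds (eventually_nhdsWithin_sign_eq_of_deriv_neg hf hz),
    self_mem_nhdsWithin] with x hsign hx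
  rw [sign_eq_one_iff.mpr (sub_pos.mpr hx)] at hsign
  exact sign_eq_one_iff.mp hsign

theorem exists_isLocalMax_mem_Ioo {f : ℝ → ℝ} {a b w : ℝ} (hf : ContinuousOn f (Icc a b))
    (hw : w ∈ Icc a b) (ha : f a < f w) (hb : f b < f w) :
    ∃ z ∈ Ioo a b, f w ≤ f z ∧ IsLocalMax f z := by
  obtain ⟨z, hz, hmax⟩ := isCompact_Icc.exists_isMaxOn ⟨w, hw⟩ hf
  have hwz : f w ≤ f z := hmax hw
  have hz' : z ∈ Ioo a b :=
    ⟨hz.1.lt_of_ne (by rintro rfl; linarith), hz.2.lt_of_ne (by rintro rfl; linarith)⟩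
  exact ⟨z, hz', hwz, hmax.isLocalMax (Icc_mem_nhds hz'.1 hz'.2)⟩

theorem exists_isLocalMin_mem_Ioo {f : ℝ → ℝ} {a b w : ℝ} (hf : ContinuousOn f (Icc a b))
    (hw : w ∈ Icc a b) (ha : f w < f a) (hb : f w < f b) :
    ∃ z ∈ Ioo a b, f z ≤ f w ∧ IsLocalMin f z := by
  obtain ⟨z, hz, hwz, hmax⟩ := exists_isLocalMax_mem_Ioo hf.neg hw (neg_lt_neg ha) (neg_lt_neg hb)
  exact ⟨z, hz, neg_le_neg_iff.mp hwz, by simpa using hmax.neg⟩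

theorem exists_isLocalMax_of_tendsto_atTop {f : ℝ → ℝ} {L x y : ℝ} (hf : Continuous f)
    (hlim : Tendsto f atTop (𝓝 L)) (hxy : x ≤ y) (hx : f x < f y) (hL : L < f y) :
    ∃ z, x < z ∧ f y ≤ f z ∧ IsLocalMax f z := by
  obtain ⟨B, hB⟩ := eventually_atTop.mp (hlim.eventually (gt_mem_nhds hL))
  obtain ⟨z, hz, hyz, hmax⟩ := exists_isLocalMax_mem_Ioo (b := max B y) hf.continuousOn
    ⟨hxy, le_max_right B y⟩ hx (hB _ (le_max_left B y))
  exact ⟨z, hz.1, hyz, hmax⟩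

theorem exists_isLocalMin_of_tendsto_atBot {f : ℝ → ℝ} {L x y : ℝ} (hf : Continuous f)
    (hlim : Tendsto f atBot (𝓝 L)) (hxy : x ≤ y) (hy : f x < f y) (hL : f x < L) :
    ∃ z, z < y ∧ f z ≤ f x ∧ IsLocalMin f z := by
  obtain ⟨A, hA⟩ := eventually_atBot.mp (hlim.eventually (lt_mem_nhds hL))
  obtain ⟨z, hz, hzx, hmin⟩ := exists_isLocalMin_mem_Ioo (a := min A x) hf.continuousOn
    ⟨min_le_right A x, hxy⟩ (hA _ (min_le_left A x)) hy
  exact ⟨z, hz.2, hzx, hmin⟩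

section WeightedDerivative

variable {u : ℝ → ℝ} {c : ℝ}

theorem hasDerivAt_exp_mul_mul_deriv {z : ℝ} (hu' : DifferentiableAt ℝ (deriv u) z) :
    HasDerivAt (fun z => Real.exp (c * z) * deriv u z)
      (Real.exp (c * z) * (deriv (deriv u) z + c * deriv u z)) z := by
  have hexp : HasDerivAt (fun z => Real.exp (c * z)) (Real.exp (c * z) * c) z := by
    simpa using ((hasDerivAt_id z).const_mul c).exp
  exact (hexp.mul hu'.hasDerivAt).congr_deriv (by ring)

theorem antitone_exp_mul_mul_deriv (hu' : Differentiable ℝ (deriv u))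
    (h : ∀ z, deriv (deriv u) z + c * deriv u z ≤ 0) :
    Antitone fun z => Real.exp (c * z) * deriv u z :=
  antitone_of_hasDerivAt_nonpos (fun z => hasDerivAt_exp_mul_mul_deriv (hu' z))
    fun z => mul_nonpos_of_nonneg_of_nonpos (Real.exp_pos _).le (h z)

theorem deriv_nonpos_of_bddBelow (hc : 0 ≤ c) (hu : Differentiable ℝ u)
    (hu' : Differentiable ℝ (deriv u)) (hbdd : BddBelow (range u))
    (h : ∀ z, deriv (deriv u) z + c * deriv u z ≤ 0) (z₀ : ℝ) : deriv u z₀ ≤ 0 := by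
  by_contra! hpos
  have hslope : ∀ z ∈ Iic z₀, deriv u z₀ ≤ deriv u z := by
    intro z hz
    have hk := antitone_exp_mul_mul_deriv hu' h (mem_Iic.mp hz)
    have hexp : Real.exp (c * z) ≤ Real.exp (c * z₀) :=
      Real.exp_le_exp.mpr (mul_le_mul_of_nonneg_left (mem_Iic.mp hz) hc)
    nlinarith [Real.exp_pos (c * z)]
  obtain ⟨L, hL⟩ := hbdd
  set z := z₀ - (u z₀ - L) / deriv u z₀ - 1
  have hz : z ≤ z₀ := by
    have : 0 ≤ (u z₀ - L) / deriv u z₀ := div_nonneg (by linarith [hL ⟨z₀, rfl⟩]) hpos.le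
    linarith
  have hmvt := (convex_Iic z₀).mul_sub_le_image_sub_of_le_deriv hu.continuous.continuousOn
    hu.differentiableOn (fun x hx => hslope x (interior_subset hx)) z hz z₀ self_mem_Iic hz
  have hfar : deriv u z₀ * (z₀ - z) = u z₀ - L + deriv u z₀ := by
    simp only [z]; field_simp; ring
  linarith [hL ⟨z, rfl⟩]

theorem eq_apply_of_le_of_deriv_eq_zero (hu : Differentiable ℝ u)
    (hu' : Differentiable ℝ (deriv u)) (h : ∀ z, deriv (deriv u) z + c * deriv u z ≤ 0)
    (hle : ∀ z, deriv u z ≤ 0) {z₀ : ℝ} (hz₀ : deriv u z₀ = 0) {z : ℝ} (hz : z ≤ z₀) :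
    u z = u z₀ := by
  have hderiv : ∀ x ≤ z₀, deriv u x = 0 := fun x hx => by
    have hk := antitone_exp_mul_mul_deriv hu' h hx
    simp only [hz₀, mul_zero] at hk
    exact le_antisymm (hle x) (nonneg_of_mul_nonneg_right hk (Real.exp_pos _))
  rcases hz.lt_or_eq with hlt | rfl
  · obtain ⟨x, hx, hslope⟩ := exists_deriv_eq_slope u hlt hu.continuous.continuousOn
      hu.differentiableOn
    rw [hderiv x hx.2.le, eq_comm, div_eq_zero_iff] at hslope
    rcases hslope with h | h <;> linarith
  · rfl

theorem exists_deriv_pos_of_eventually_nhdsLT (hu' : Differentiable ℝ (deriv u)) {z : ℝ}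
    (h : ∀ᶠ x in 𝓝[<] z, deriv (deriv u) x + c * deriv u x < 0) (hz : deriv u z = 0) :
    ∃ x, 0 < deriv u x := by
  obtain ⟨w, hw, hsub⟩ := mem_nhdsLT_iff_exists_Ioo_subset.mp h
  have hanti : StrictAntiOn (fun x => Real.exp (c * x) * deriv u x) (Icc w z) :=
    strictAntiOn_of_hasDerivWithinAt_neg (convex_Icc w z)
      (fun x _ => (hasDerivAt_exp_mul_mul_deriv (hu' x)).continuousAt.continuousWithinAt)
      (fun x _ => (hasDerivAt_exp_mul_mul_deriv (hu' x)).hasDerivWithinAt)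
      (fun x hx => mul_neg_of_pos_of_neg (Real.exp_pos _) (hsub (by simpa using hx)))
  have hwz := hanti (left_mem_Icc.mpr (mem_Iio.mp hw).le) (right_mem_Icc.mpr (mem_Iio.mp hw).le) hw
  simp only [hz, mul_zero] at hwz
  exact ⟨w, pos_of_mul_pos_right hwz (Real.exp_pos _).le⟩

end WeightedDerivative

theorem lipschitzWith_companionField {p q C : ℝ} (hpq : |p| + |q| ≤ C) :
    LipschitzWith (1 + C).toNNReal fun w : ℝ × ℝ => (w.2, -(p * w.2) - q * w.1) := by
  have hC : 0 ≤ C := (add_nonneg (abs_nonneg p) (abs_nonneg q)).trans hpq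
  refine LipschitzWith.of_dist_le_mul fun w w' => ?_
  simp only [Prod.dist_eq, Real.dist_eq, Real.coe_toNNReal _ (by linarith : 0 ≤ 1 + C)]
  set m := max |w.1 - w'.1| |w.2 - w'.2|
  have h₁ : |w.1 - w'.1| ≤ m := le_max_left _ _
  have h₂ : |w.2 - w'.2| ≤ m := le_max_right _ _
  have hm : 0 ≤ m := (abs_nonneg _).trans h₁
  have hsecond : |-(p * w.2) - q * w.1 - (-(p * w'.2) - q * w'.1)| ≤ C * m :=
    calc _ = |p * (w.2 - w'.2) + q * (w.1 - w'.1)| := by rw [← abs_neg]; ring_nf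
      _ ≤ |p| * |w.2 - w'.2| + |q| * |w.1 - w'.1| := by
        rw [← abs_mul, ← abs_mul]; exact abs_add_le _ _
      _ ≤ (|p| + |q|) * m := by rw [add_mul]; gcongr
      _ ≤ C * m := mul_le_mul_of_nonneg_right hpq hm
  exact max_le (by nlinarith) (by nlinarith)

theorem linear_ode_solution_eq_zero {u p q : ℝ → ℝ} (hu : Differentiable ℝ u)
    (hu' : Differentiable ℝ (deriv u)) (hp : Continuous p) (hq : Continuous q)
    (hode : ∀ t, deriv (deriv u) t + p t * deriv u t + q t * u t = 0) {t₀ : ℝ}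
    (h₀ : u t₀ = 0) (h₀' : deriv u t₀ = 0) (t : ℝ) : u t = 0 := by
  obtain ⟨a, b, ht, ht₀⟩ : ∃ a b, t ∈ Ioo a b ∧ t₀ ∈ Ioo a b :=
    ⟨min t t₀ - 1, max t t₀ + 1,
      ⟨by linarith [min_le_left t t₀], by linarith [le_max_left t t₀]⟩,
      ⟨by linarith [min_le_right t t₀], by linarith [le_max_right t t₀]⟩⟩
  obtain ⟨C, hC⟩ := isCompact_Icc.exists_bound_of_continuousOn
    (s := Icc a b) (hp.abs.add hq.abs).continuousOn
  have hpq : ∀ s ∈ Ioo a b, |p s| + |q s| ≤ C := fun s hs =>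
    (le_abs_self _).trans (by simpa using hC s (Ioo_subset_Icc_self hs))
  let V : ℝ → ℝ × ℝ → ℝ × ℝ := fun s w => (w.2, -(p s * w.2) - q s * w.1)
  have hsol : ∀ s, HasDerivAt (fun s => (u s, deriv u s)) (V s (u s, deriv u s)) s := fun s =>
    (hu s).hasDerivAt.prodMk ((hu' s).hasDerivAt.congr_deriv (by linarith [hode s]))
  have hzero : ∀ s, HasDerivAt (fun _ => (0 : ℝ × ℝ)) (V s 0) s := fun s => by
    simpa [V, Prod.zero_eq_mk] using hasDerivAt_const s (0 : ℝ × ℝ)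
  have heq := ODE_solution_unique_of_mem_Icc
    (fun s hs => (lipschitzWith_companionField (hpq s hs)).lipschitzOnWith (s := univ)) ht₀
    (hu.continuous.prodMk hu'.continuous).continuousOn (fun s _ => hsol s)
    (fun _ _ => mem_univ _) continuousOn_const (fun s _ => hzero s) (fun _ _ => mem_univ _)
    (by simp [h₀, h₀']) (Ioo_subset_Icc_self ht)
  simpa using congrArg Prod.fst heq

noncomputable def fNullcline (α₂ β₁ β₂ M : ℝ) : ℝ :=
  bP α₂ β₁ β₂ * (sigmaP α₂ β₁ β₂ - 1) + bP α₂ β₁ β₂ * M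

theorem fP_eq_mul (α₂ β₁ β₂ M I : ℝ) :
    fP α₂ β₁ β₂ M I =
      I * (aP α₂ β₁ β₂ / (α₂ * I + β₂ * (1 - M))) * (fNullcline α₂ β₁ β₂ M - I) := by
  unfold fP fNullcline
  ring

section Parameters

variable {α₂ β₁ β₂ : ℝ}

theorem sigmaP_pos (hα₂ : 0 < α₂) (hβ₁ : 0 < β₁) (hβ₂ : 0 < β₂) : 0 < sigmaP α₂ β₁ β₂ :=
  div_pos hα₂ (mul_pos hβ₁ hβ₂)

theorem aP_pos (hα₂ : 0 < α₂) (hβ₁ : 0 < β₁) (hβ₂ : 0 < β₂) : 0 < aP α₂ β₁ β₂ :=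
  mul_pos hβ₁ (by have := sigmaP_pos hα₂ hβ₁ hβ₂; positivity)

theorem bP_pos (hα₂ : 0 < α₂) (hβ₁ : 0 < β₁) (hβ₂ : 0 < β₂) : 0 < bP α₂ β₁ β₂ :=
  div_pos hβ₂ (by have := sigmaP_pos hα₂ hβ₁ hβ₂; positivity)

end Parameters

namespace IsFPTW

variable {α₂ β₁ β₂ δ D v : ℝ} {M I : ℝ → ℝ}

theorem deriv_deriv_M_add_nonpos (h : IsFPTW α₂ β₁ β₂ δ D v M I) (z : ℝ) :
    deriv (deriv M) z + v * deriv M z ≤ 0 := by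
  have hsrc : 0 ≤ I z * M z * (1 - M z) :=
    mul_nonneg (mul_nonneg (h.rangeI z).1 (h.rangeM z).1) (sub_nonneg.mpr (h.rangeM z).2)
  linarith [h.odeM z]

theorem deriv_deriv_I_add (h : IsFPTW α₂ β₁ β₂ δ D v M I) (hD : 0 < D) (hδ : 0 < δ) (z : ℝ) :
    deriv (deriv I) z + v / D * deriv I z = -fP α₂ β₁ β₂ (M z) (I z) / (δ * D) := by
  field_simp
  linarith [h.odeI z]

theorem deriv_M_nonpos (h : IsFPTW α₂ β₁ β₂ δ D v M I) (hv : 0 ≤ v) (z : ℝ) :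
    deriv M z ≤ 0 :=
  deriv_nonpos_of_bddBelow hv (h.smoothM.differentiable (by norm_num))
    h.smoothM.differentiable_deriv_two ⟨0, by rintro _ ⟨x, rfl⟩; exact (h.rangeM x).1⟩
    h.deriv_deriv_M_add_nonpos z

theorem deriv_M_ne_zero_of_eq_one (h : IsFPTW α₂ β₁ β₂ δ D v M I) {z : ℝ} (hz : M z = 1) :
    deriv M z ≠ 0 := by
  intro hz'
  have hdiff := h.smoothM.differentiable (by norm_num)
  have hderiv : deriv (fun t => 1 - M t) = fun t => -deriv M t := deriv_const_sub' 1
  have hone : ∀ t, 1 - M t = 0 := by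
    refine linear_ode_solution_eq_zero (p := fun _ => v) (q := fun t => -(I t * M t))
      (t₀ := z) (hdiff.const_sub 1) ?_ continuous_const
      (by have := h.smoothI.continuous; have := hdiff.continuous; fun_prop) (fun t => ?_)
      (by simp [hz]) (by simp [hderiv, hz'])
    · rw [hderiv]; exact h.smoothM.differentiable_deriv_two.neg
    · simp only [hderiv, deriv.fun_neg]; linarith [h.odeM t]
  have hlim : Tendsto M atTop (𝓝 1) := by
    rw [show M = fun _ => 1 from funext fun t => by linarith [hone t]]
    exact tendsto_const_nhds
  exact one_ne_zero (tendsto_nhds_unique hlim h.limM_top)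

theorem deriv_M_neg (h : IsFPTW α₂ β₁ β₂ δ D v M I) (hv : 0 ≤ v) (z : ℝ) : deriv M z < 0 := by
  refine (h.deriv_M_nonpos hv z).lt_of_ne fun hz => h.deriv_M_ne_zero_of_eq_one ?_ hz
  have hconst : M =ᶠ[atBot] fun _ => M z := eventually_atBot.mpr ⟨z, fun y hy =>
    eq_apply_of_le_of_deriv_eq_zero (h.smoothM.differentiable (by norm_num))
      h.smoothM.differentiable_deriv_two h.deriv_deriv_M_add_nonpos (h.deriv_M_nonpos hv) hz hy⟩
  exact tendsto_nhds_unique (tendsto_const_nhds.congr' hconst.symm) h.limM_bot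

theorem M_lt_one (h : IsFPTW α₂ β₁ β₂ δ D v M I) (hv : 0 ≤ v) (z : ℝ) : M z < 1 :=
  (strictAnti_of_deriv_neg (h.deriv_M_neg hv) (sub_one_lt z)).trans_le (h.rangeM (z - 1)).2

theorem fP_den_pos (h : IsFPTW α₂ β₁ β₂ δ D v M I) (hα₂ : 0 ≤ α₂) (hβ₂ : 0 < β₂) (hv : 0 ≤ v)
    (z : ℝ) : 0 < α₂ * I z + β₂ * (1 - M z) := by
  have := mul_nonneg hα₂ (h.rangeI z).1
  have := mul_pos hβ₂ (sub_pos.mpr (h.M_lt_one hv z))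
  linarith

theorem sign_fP (h : IsFPTW α₂ β₁ β₂ δ D v M I) (hα₂ : 0 < α₂) (hβ₁ : 0 < β₁) (hβ₂ : 0 < β₂)
    (hv : 0 ≤ v) {z : ℝ} (hI : 0 < I z) :
    SignType.sign (fP α₂ β₁ β₂ (M z) (I z)) = SignType.sign (fNullcline α₂ β₁ β₂ (M z) - I z) := by
  rw [fP_eq_mul, sign_mul, sign_pos (mul_pos hI (div_pos (aP_pos hα₂ hβ₁ hβ₂)
    (h.fP_den_pos hα₂.le hβ₂ hv z))), one_mul]

theorem deriv_I_ne_zero_of_eq_zero (h : IsFPTW α₂ β₁ β₂ δ D v M I) (hα₂ : 0 < α₂)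
    (hβ₁ : 0 < β₁) (hβ₂ : 0 < β₂) (hD : 0 < D) (hδ : 0 < δ) (hv : 0 ≤ v) {z : ℝ}
    (hz : I z = 0) : deriv I z ≠ 0 := by
  intro hz'
  -- `f(M, I)` carries the factor `I`, so `I` solves a linear equation `I'' + (v/D) I' + ρ I = 0`.
  set ρ : ℝ → ℝ := fun t =>
    aP α₂ β₁ β₂ / (α₂ * I t + β₂ * (1 - M t)) * (fNullcline α₂ β₁ β₂ (M t) - I t) / (δ * D)
  have hIc := h.smoothI.continuous
  have hMc := h.smoothM.continuous
  have hρ : Continuous ρ := by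
    refine (Continuous.mul (continuous_const.div (by fun_prop)
      fun t => (h.fP_den_pos hα₂.le hβ₂ hv t).ne') ?_).div_const _
    unfold fNullcline
    fun_prop
  have hzero := linear_ode_solution_eq_zero (p := fun _ => v / D) (q := ρ) (t₀ := z)
    (h.smoothI.differentiable (by norm_num)) h.smoothI.differentiable_deriv_two
    continuous_const hρ (fun t => ?_) hz hz'
  · have hlim : Tendsto I atBot (𝓝 0) := by
      rw [show I = fun _ => 0 from funext hzero]
      exact tendsto_const_nhds
    exact (mul_pos (bP_pos hα₂ hβ₁ hβ₂) (sigmaP_pos hα₂ hβ₁ hβ₂)).ne'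
      (tendsto_nhds_unique h.limI_bot hlim)
  · rw [h.deriv_deriv_I_add hD hδ, fP_eq_mul]
    simp only [ρ]
    ring

theorem I_le_fNullcline_of_isLocalMax (h : IsFPTW α₂ β₁ β₂ δ D v M I) (hα₂ : 0 < α₂)
    (hβ₁ : 0 < β₁) (hβ₂ : 0 < β₂) (hD : 0 < D) (hδ : 0 < δ) (hv : 0 ≤ v) {z : ℝ}
    (hmax : IsLocalMax I z) (hI : 0 < I z) : I z ≤ fNullcline α₂ β₁ β₂ (M z) := by
  have hf : 0 ≤ fP α₂ β₁ β₂ (M z) (I z) := by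
    have hI'' := hmax.deriv_deriv_nonpos h.smoothI.continuous.continuousAt
    have := h.odeI z
    rw [hmax.deriv_eq_zero] at this
    nlinarith [mul_pos hδ hD]
  rw [← sign_nonneg_iff, h.sign_fP hα₂ hβ₁ hβ₂ hv hI, sign_nonneg_iff] at hf
  linarith

theorem fNullcline_le_I_of_isLocalMin (h : IsFPTW α₂ β₁ β₂ δ D v M I) (hα₂ : 0 < α₂)
    (hβ₁ : 0 < β₁) (hβ₂ : 0 < β₂) (hD : 0 < D) (hδ : 0 < δ) (hv : 0 ≤ v) {z : ℝ}
    (hmin : IsLocalMin I z) (hI : 0 < I z) : fNullcline α₂ β₁ β₂ (M z) ≤ I z := by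
  have hf : fP α₂ β₁ β₂ (M z) (I z) ≤ 0 := by
    have hI'' := hmin.deriv_deriv_nonneg h.smoothI.continuous.continuousAt
    have := h.odeI z
    rw [hmin.deriv_eq_zero] at this
    nlinarith [mul_pos hδ hD]
  rw [← sign_nonpos_iff, h.sign_fP hα₂ hβ₁ hβ₂ hv hI, sign_nonpos_iff] at hf
  linarith

theorem antitone_I (h : IsFPTW α₂ β₁ β₂ δ D v M I) (hα₂ : 0 < α₂) (hβ₁ : 0 < β₁)
    (hβ₂ : 0 < β₂) (hD : 0 < D) (hδ : 0 < δ) (hv : 0 ≤ v) : Antitone I := by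
  intro x y hxy
  by_contra! hlt
  have hIc := h.smoothI.continuous
  obtain ⟨z₁, hxz₁, hyz₁, hmax⟩ := exists_isLocalMax_of_tendsto_atTop hIc h.limI_top hxy hlt
    ((h.rangeI x).1.trans_lt hlt)
  have hz₁ : I y ≤ fNullcline α₂ β₁ β₂ (M z₁) := hyz₁.trans <|
    h.I_le_fNullcline_of_isLocalMax hα₂ hβ₁ hβ₂ hD hδ hv hmax (by linarith [(h.rangeI x).1])
  have hb := bP_pos hα₂ hβ₁ hβ₂
  have hlim : fNullcline α₂ β₁ β₂ (M z₁) < bP α₂ β₁ β₂ * sigmaP α₂ β₁ β₂ := by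
    unfold fNullcline
    nlinarith [h.M_lt_one hv z₁]
  obtain ⟨z₂, hz₂z₁, hz₂x, hmin⟩ := exists_isLocalMin_of_tendsto_atBot hIc h.limI_bot hxz₁.le
    (hlt.trans_le hyz₁) (by linarith)
  have hIz₂ : 0 < I z₂ := (h.rangeI z₂).1.lt_of_ne fun h0 =>
    h.deriv_I_ne_zero_of_eq_zero hα₂ hβ₁ hβ₂ hD hδ hv h0.symm hmin.deriv_eq_zero
  have hz₂ := h.fNullcline_le_I_of_isLocalMin hα₂ hβ₁ hβ₂ hD hδ hv hmin hIz₂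
  have hM : M z₁ < M z₂ := strictAnti_of_deriv_neg (h.deriv_M_neg hv) hz₂z₁
  unfold fNullcline at hz₁ hz₂
  nlinarith

theorem deriv_I_neg (h : IsFPTW α₂ β₁ β₂ δ D v M I) (hα₂ : 0 < α₂) (hβ₁ : 0 < β₁)
    (hβ₂ : 0 < β₂) (hD : 0 < D) (hδ : 0 < δ) (hv : 0 ≤ v) (z : ℝ) : deriv I z < 0 := by
  have hanti := h.antitone_I hα₂ hβ₁ hβ₂ hD hδ hv
  have hle : ∀ x, deriv I x ≤ 0 := fun _ => hanti.deriv_nonpos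
  refine (hle z).lt_of_ne fun hz => ?_
  have hI : 0 < I z := (h.rangeI z).1.lt_of_ne fun h0 =>
    h.deriv_I_ne_zero_of_eq_zero hα₂ hβ₁ hβ₂ hD hδ hv h0.symm hz
  have hI'' : deriv (deriv I) z = 0 :=
    IsLocalMax.deriv_eq_zero (Eventually.of_forall fun x => hz ▸ hle x)
  set E : ℝ → ℝ := fun t => fNullcline α₂ β₁ β₂ (M t) - I t
  have hE : E z = 0 := by
    have hf := h.odeI z
    rw [hz, hI'', mul_zero, mul_zero, add_zero, mul_zero, zero_add, ← sign_eq_zero_iff,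
      h.sign_fP hα₂ hβ₁ hβ₂ hv hI, sign_eq_zero_iff] at hf
    exact hf
  have hE' : deriv E z < 0 := by
    have hd : HasDerivAt E (bP α₂ β₁ β₂ * deriv M z - deriv I z) z :=
      ((((h.smoothM.differentiable (by norm_num)) z).hasDerivAt.const_mul _).const_add _).sub
        ((h.smoothI.differentiable (by norm_num)) z).hasDerivAt
    rw [hd.deriv, hz, sub_zero]
    exact mul_neg_of_pos_of_neg (bP_pos hα₂ hβ₁ hβ₂) (h.deriv_M_neg hv z)
  have hode_neg : ∀ᶠ x in 𝓝[<] z, deriv (deriv I) x + v / D * deriv I x < 0 := by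
    filter_upwards [eventually_nhdsLT_pos_of_deriv_neg hE' hE, self_mem_nhdsWithin]
      with x hEx hxz
    have hIx : 0 < I x := hI.trans_le (hanti (le_of_lt hxz))
    have hf : 0 < fP α₂ β₁ β₂ (M x) (I x) := by
      rw [← sign_eq_one_iff, h.sign_fP hα₂ hβ₁ hβ₂ hv hIx]
      exact sign_pos hEx
    rw [h.deriv_deriv_I_add hD hδ]
    exact div_neg_of_neg_of_pos (neg_neg_of_pos hf) (mul_pos hδ hD)
  obtain ⟨x, hx⟩ := exists_deriv_pos_of_eventually_nhdsLT h.smoothI.differentiable_deriv_two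
    hode_neg hz
  exact (hle x).not_gt hx

end IsFPTW

theorem fptw_strict_decrease_general (α₂ β₁ β₂ δ D v : ℝ)
    (hα₂ : 0 < α₂) (hβ₁ : 0 < β₁) (hβ₂ : 0 < β₂) (hD : 0 < D)
    (hδ : 0 < δ) (hv : 0 < v) (M I : ℝ → ℝ) (h : IsFPTW α₂ β₁ β₂ δ D v M I) :
    ∀ z : ℝ, deriv M z < 0 ∧ deriv I z < 0 := fun z =>
  ⟨h.deriv_M_neg hv.le z, h.deriv_I_neg hα₂ hβ₁ hβ₂ hD hδ hv.le z⟩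

/-- Proposition 4.3: both components of an [FPTW] are strictly monotone decreasing. -/
theorem fptw_strict_decrease (α₂ β₁ β₂ δ D v : ℝ)
    (hα₂ : 0 < α₂) (hβ₁ : 0 < β₁) (hβ₂ : 0 < β₂) (hD : 0 < D)
    (hδ : 0 < δ) (hδσ : δ ≤ sigmaP α₂ β₁ β₂) (hσ : sigmaP α₂ β₁ β₂ ≤ 1)
    (hv : 0 < v) (M I : ℝ → ℝ) (h : IsFPTW α₂ β₁ β₂ δ D v M I) :
    ∀ z : ℝ, deriv M z < 0 ∧ deriv I z < 0 :=
  fptw_strict_decrease_general α₂ β₁ β₂ δ D v hα₂ hβ₁ hβ₂ hD hδ hv M I h
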